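/- Max–min principle for the cyclic sawtooth chain: (a) For λ = 1/2, the smallest eigenvalue of the Hermitian matrix Ĵ_saw(1/2, q) equals −3/2 for every q ∈ ℝ (a flat band). (b) For every λ ∈ ℝ there exists q ∈ {0, π} such that the smallest eigenvalue of Ĵ_saw(λ, q) is at most −3/2. Hence the maximum over λ ∈ ℝ of the minimum over q of the smallest eigenvalue of Ĵ_saw(λ,q) equals −3/2 and is attained at λ = 1/2. -/
import Mathlib


/-- The Fourier-transformed dressed coupling matrix of the cyclic sawtooth chain
with `J₁ = J₂ = J₃ = 1`:
`Ĵ_saw(λ,q) = [[λ + 2 cos q, 1 + e^{-iq}], [1 + e^{iq}, -λ]]`. -/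
noncomputable def Jsaw (lam q : ℝ) : Matrix (Fin 2) (Fin 2) ℂ :=
  !![((lam + 2 * Real.cos q : ℝ) : ℂ), 1 + Complex.exp (-(Complex.I * (q : ℂ)));
     1 + Complex.exp (Complex.I * (q : ℂ)), ((-lam : ℝ) : ℂ)]

open Complex Matrix

-- eigenvalue implies characteristic equation
lemma char_of_eig (a b c d e : ℂ) (v : Fin 2 → ℂ) (hv : v ≠ 0)
    (h : (!![a, b; c, d]).mulVec v = e • v) : (a - e) * (d - e) = b * c := by
  have h0 := congrFun h 0
  have h1 := congrFun h 1
  simp [Matrix.mulVec, dotProduct, Fin.sum_univ_two] at h0 h1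
  by_cases hx : v 0 = 0
  · have hy : v 1 ≠ 0 := by
      intro hy; apply hv; funext i; fin_cases i <;> simp [hx, hy]
    have key : ((a - e) * (d - e) - b * c) * v 1 = 0 := by
      linear_combination (a - e) * h1 - c * h0
    rcases mul_eq_zero.mp key with h' | h'
    · linear_combination h'
    · exact absurd h' hy
  · have key : ((a - e) * (d - e) - b * c) * v 0 = 0 := by
      linear_combination (d - e) * h0 - b * h1
    rcases mul_eq_zero.mp key with h' | h'
    · linear_combination h'
    · exact absurd h' hx

-- characteristic equation implies eigenvector (when e ≠ d)
lemma eig_of_char (a b c d e : ℂ) (h : (a - e) * (d - e) = b * c) (hne : e ≠ d) :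
    ∃ v : Fin 2 → ℂ, v ≠ 0 ∧ (!![a, b; c, d]).mulVec v = e • v := by
  refine ⟨![e - d, c], ?_, ?_⟩
  · intro hv
    have h0 := congrFun hv 0
    simp at h0
    exact hne (by linear_combination h0)
  · funext i
    fin_cases i <;>
      simp [Matrix.mulVec, dotProduct, Fin.sum_univ_two] <;>
      first
        | linear_combination (-2 : ℂ) * h
        | linear_combination -h
        | linear_combination h
        | ring

lemma jsaw_bc (q : ℝ) :
    (1 + Complex.exp (-(Complex.I * q))) * (1 + Complex.exp (Complex.I * q))
      = 2 + 2 * (Real.cos q : ℂ) := by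
  have h2 := Complex.two_cos (q : ℂ)
  rw [mul_comm ((q:ℂ)) Complex.I, show (-(q:ℂ)) * Complex.I = -(Complex.I * q) by ring] at h2
  have h3 : Complex.exp (-(Complex.I * q)) * Complex.exp (Complex.I * q) = 1 := by
    rw [← Complex.exp_add, neg_add_cancel, Complex.exp_zero]
  rw [Complex.ofReal_cos]
  linear_combination h3 - h2

lemma flat_least (q : ℝ) : IsLeast
    {e : ℝ | ∃ v : Fin 2 → ℂ, v ≠ 0 ∧ (Jsaw (1/2) q).mulVec v = (e : ℂ) • v}
    (-3/2) := by
  constructor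
  · -- membership: -3/2 is an eigenvalue
    have hchar : (((1/2 + 2 * Real.cos q : ℝ) : ℂ) - ((-3/2 : ℝ) : ℂ)) *
        (((-(1/2) : ℝ) : ℂ) - ((-3/2 : ℝ) : ℂ)) =
        (1 + Complex.exp (-(Complex.I * q))) * (1 + Complex.exp (Complex.I * q)) := by
      rw [jsaw_bc]
      push_cast
      ring
    have hne : ((-3/2 : ℝ) : ℂ) ≠ ((-(1/2) : ℝ) : ℂ) := by
      intro h
      have : (-3/2 : ℝ) = -(1/2) := by exact_mod_cast h
      norm_num at this
    obtain ⟨v, hv, hmv⟩ := eig_of_char _ _ _ _ _ hchar hne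
    exact ⟨v, hv, hmv⟩
  · rintro e ⟨v, hv, hmv⟩
    have hmv' : (!![((1/2 + 2 * Real.cos q : ℝ) : ℂ), 1 + Complex.exp (-(Complex.I * q));
        1 + Complex.exp (Complex.I * q), ((-(1/2) : ℝ) : ℂ)]).mulVec v = ((e : ℝ) : ℂ) • v := hmv
    have hchar := char_of_eig _ _ _ _ ((e : ℝ) : ℂ) v hv hmv'
    have hbc := jsaw_bc q
    have hreal : ((1/2 + 2 * Real.cos q - e) * (-(1/2) - e) - (2 + 2 * Real.cos q) : ℝ) = 0 := by
      have h : (((1/2 + 2 * Real.cos q - e) * (-(1/2) - e) - (2 + 2 * Real.cos q) : ℝ) : ℂ) = 0 := by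
        push_cast at hchar hbc ⊢
        linear_combination hchar + hbc
      exact_mod_cast h
    have hfac : (e + 3/2) * (e - 2 * Real.cos q - 3/2) = 0 := by linear_combination hreal
    have hcos := Real.neg_one_le_cos q
    rcases mul_eq_zero.mp hfac with h' | h' <;> nlinarith


/-- Max–min principle for the cyclic sawtooth chain:
(a) at `λ = 1/2` the smallest eigenvalue of `Ĵ_saw(1/2, q)` equals `-3/2` for
every `q` (flat band);
(b) for every `λ` there is `q ∈ {0, π}` where `Ĵ_saw(λ, q)` has an eigenvalue
`≤ -3/2`;
(c) hence `-3/2` is the greatest value, over `λ ∈ ℝ`, of the infimum over `q`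
of the eigenvalues of `Ĵ_saw(λ, q)`, and this infimum is attained at `λ = 1/2`. -/
theorem sawtooth_max_min_principle :
    (∀ q : ℝ, IsLeast
      {e : ℝ | ∃ v : Fin 2 → ℂ, v ≠ 0 ∧ (Jsaw (1/2) q).mulVec v = (e : ℂ) • v}
      (-3/2))
    ∧
    (∀ lam : ℝ, ∃ q ∈ ({0, Real.pi} : Set ℝ), ∃ e : ℝ, e ≤ -3/2 ∧
      ∃ v : Fin 2 → ℂ, v ≠ 0 ∧ (Jsaw lam q).mulVec v = (e : ℂ) • v)
    ∧
    IsGreatest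
      {E : ℝ | ∃ lam : ℝ, IsGLB
        {e : ℝ | ∃ q : ℝ, ∃ v : Fin 2 → ℂ, v ≠ 0 ∧
          (Jsaw lam q).mulVec v = (e : ℂ) • v} E}
      (-3/2)
    ∧
    IsGLB {e : ℝ | ∃ q : ℝ, ∃ v : Fin 2 → ℂ, v ≠ 0 ∧
        (Jsaw (1/2) q).mulVec v = (e : ℂ) • v} (-3/2) := by
  have partB : ∀ lam : ℝ, ∃ q ∈ ({0, Real.pi} : Set ℝ), ∃ e : ℝ, e ≤ -3/2 ∧
      ∃ v : Fin 2 → ℂ, v ≠ 0 ∧ (Jsaw lam q).mulVec v = (e : ℂ) • v := by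
    intro lam
    by_cases hl : lam ≤ 1/2
    · -- q = π, e = lam - 2
      refine ⟨Real.pi, Or.inr rfl, lam - 2, by linarith, ?_⟩
      have hchar : (((lam + 2 * Real.cos Real.pi : ℝ) : ℂ) - ((lam - 2 : ℝ) : ℂ)) *
          (((-lam : ℝ) : ℂ) - ((lam - 2 : ℝ) : ℂ)) =
          (1 + Complex.exp (-(Complex.I * (Real.pi : ℝ)))) *
            (1 + Complex.exp (Complex.I * (Real.pi : ℝ))) := by
        rw [jsaw_bc]
        push_cast [Real.cos_pi]
        ring
      have hne : ((lam - 2 : ℝ) : ℂ) ≠ ((-lam : ℝ) : ℂ) := by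
        intro h
        have : (lam - 2 : ℝ) = -lam := by exact_mod_cast h
        linarith
      obtain ⟨v, hv, hmv⟩ := eig_of_char _ _ _ _ _ hchar hne
      exact ⟨v, hv, hmv⟩
    · -- q = 0, e = 1 - √((lam+1)² + 4)
      push_neg at hl
      set s := Real.sqrt ((lam + 1) ^ 2 + 4) with hs_def
      have hs0 : 0 ≤ s := Real.sqrt_nonneg _
      have hs : s ^ 2 = (lam + 1) ^ 2 + 4 := Real.sq_sqrt (by positivity)
      have hs52 : 5/2 ≤ s := by nlinarith
      refine ⟨0, Or.inl rfl, 1 - s, by linarith, ?_⟩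
      have hr : (lam + 2 * Real.cos 0 - (1 - s)) * (-lam - (1 - s))
          = 2 + 2 * Real.cos 0 := by
        rw [Real.cos_zero]
        linear_combination hs
      have hchar : (((lam + 2 * Real.cos (0:ℝ) : ℝ) : ℂ) - ((1 - s : ℝ) : ℂ)) *
          (((-lam : ℝ) : ℂ) - ((1 - s : ℝ) : ℂ)) =
          (1 + Complex.exp (-(Complex.I * ((0:ℝ) : ℂ)))) *
            (1 + Complex.exp (Complex.I * ((0:ℝ) : ℂ))) := by
        rw [jsaw_bc]
        exact_mod_cast congrArg (Complex.ofReal) hr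
      have hne : ((1 - s : ℝ) : ℂ) ≠ ((-lam : ℝ) : ℂ) := by
        intro h
        have h2 : (1 - s : ℝ) = -lam := by exact_mod_cast h
        nlinarith
      obtain ⟨v, hv, hmv⟩ := eig_of_char _ _ _ _ _ hchar hne
      exact ⟨v, hv, hmv⟩
  have partD : IsGLB {e : ℝ | ∃ q : ℝ, ∃ v : Fin 2 → ℂ, v ≠ 0 ∧
      (Jsaw (1/2) q).mulVec v = (e : ℂ) • v} (-3/2) := by
    refine IsLeast.isGLB ⟨⟨0, (flat_least 0).1⟩, ?_⟩
    rintro e ⟨q, v, hv, hmv⟩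
    exact (flat_least q).2 ⟨v, hv, hmv⟩
  refine ⟨flat_least, partB, ⟨⟨1/2, partD⟩, ?_⟩, partD⟩
  rintro E ⟨lam, hglb⟩
  obtain ⟨q, hq, e, he, v, hv, hmv⟩ := partB lam
  exact le_trans (hglb.1 ⟨q, v, hv, hmv⟩) he
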